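/- Let Ω ⊂ ℝⁿ be a bounded measurable set and let v : ℝⁿ → ℝⁿ be a continuously differentiable vector field with bounded derivative. For t ∈ ℝ small, let Ω_t := (id + t·v)(Ω) be the image of Ω under the map x ↦ x + t·v(x). Then the function t ↦ |Ω_t| (Lebesgue measure) is differentiable at t = 0 with derivative d/dt |Ω_t| |_{t=0} = ∫_Ω div v(x) dx; in other words |Ω_t| = |Ω| + t·∫_Ω div v dx + o(t) as t → 0. -/

import Mathlib

/-!
For `|t| * ‖Dv‖ < 1` the map `x ↦ x + t • v x` is the identity plus a contraction, hence
injective, and its Jacobian `det (1 + t • Dv x)` is positive; the change of variables formula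
then gives `|Ω_t| = ∫_Ω det (1 + t • Dv x) dx`. The integrand is a polynomial in `t` of degree
at most `n` whose derivative at `0` is `tr (Dv x) = div v x`. Lagrange interpolation at `n + 1`
fixed nodes writes it through its values at the nodes, so its integral over `Ω` is again a
polynomial in `t`, with derivative `∫_Ω div v` at `0`.
-/

open MeasureTheory

/-- The divergence of a vector field on Euclidean space, as the trace of its
(Fréchet) derivative. -/
noncomputable def divergence {n : ℕ}
    (v : EuclideanSpace ℝ (Fin n) → EuclideanSpace ℝ (Fin n))
    (x : EuclideanSpace ℝ (Fin n)) : ℝ :=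
  LinearMap.trace ℝ (EuclideanSpace ℝ (Fin n)) (fderiv ℝ v x).toLinearMap

open Polynomial

section PolynomialFamily

variable {α : Type*} [MeasurableSpace α] {μ : Measure α} {p : α → ℝ[X]} {N : ℕ}

theorem exists_polynomial_integral_linearMap_eq (hdeg : ∀ x, (p x).natDegree ≤ N)
    (hint : ∀ r, Integrable (fun x => (p x).eval r) μ) :
    ∃ q : ℝ[X], ∀ L : ℝ[X] →ₗ[ℝ] ℝ, ∫ x, L (p x) ∂μ = L q := by
  set s : Finset ℝ := (Finset.range (N + 1)).map Nat.castEmbedding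
  have hdeg_lt : ∀ x, (p x).degree < s.card := fun x =>
    (degree_le_of_natDegree_le (hdeg x)).trans_lt (by simp [s]; exact_mod_cast N.lt_succ_self)
  have hinterp : ∀ x, p x = ∑ r ∈ s, (p x).eval r • Lagrange.basis s id r := fun x => by
    conv_lhs =>
      rw [Lagrange.eq_interpolate (Set.injOn_id _) (hdeg_lt x), Lagrange.interpolate_apply]
    simp only [id, C_mul']
  refine ⟨∑ r ∈ s, (∫ x, (p x).eval r ∂μ) • Lagrange.basis s id r, fun L => ?_⟩
  have hL : ∀ x, L (p x) = ∑ r ∈ s, (p x).eval r * L (Lagrange.basis s id r) := fun x => by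
    conv_lhs => rw [hinterp x]
    simp only [map_sum, map_smul, smul_eq_mul]
  simp only [hL, map_sum, map_smul, smul_eq_mul]
  rw [integral_finsetSum _ fun r _ => (hint r).mul_const _]
  simp only [integral_mul_const]

theorem hasDerivAt_integral_eval (hdeg : ∀ x, (p x).natDegree ≤ N)
    (hint : ∀ r, Integrable (fun x => (p x).eval r) μ) (t : ℝ) :
    HasDerivAt (fun t => ∫ x, (p x).eval t ∂μ) (∫ x, (p x).derivative.eval t ∂μ) t := by
  obtain ⟨q, hq⟩ := exists_polynomial_integral_linearMap_eq hdeg hint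
  have hval : (fun t => ∫ x, (p x).eval t ∂μ) = fun t => q.eval t :=
    funext fun t => hq (leval t)
  rw [hval, show ∫ x, (p x).derivative.eval t ∂μ = q.derivative.eval t from
    hq ((leval t).comp derivative)]
  exact q.hasDerivAt t

end PolynomialFamily

namespace LinearMap

variable {R M ι : Type*} [CommRing R] [AddCommGroup M] [Module R M] [Fintype ι] [DecidableEq ι]

noncomputable def detOneAddXSMul (b : Module.Basis ι R M) (f : M →ₗ[R] M) : R[X] :=
  (1 + (X : R[X]) • (toMatrix b b f).map C).det

variable (b : Module.Basis ι R M) (f : M →ₗ[R] M)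

theorem eval_detOneAddXSMul (t : R) :
    (detOneAddXSMul b f).eval t = LinearMap.det (1 + t • f) := by
  rw [← det_toMatrix b, map_add, map_smul, toMatrix_one, detOneAddXSMul, ← coe_evalRingHom,
    RingHom.map_det]
  congr 1
  ext i j
  simp only [RingHom.mapMatrix_apply, coe_evalRingHom, Matrix.map_apply, Matrix.add_apply,
    Matrix.smul_apply, smul_eq_mul, Matrix.one_apply, apply_ite (eval t), eval_add, eval_mul,
    eval_X, eval_C, eval_one, eval_zero]

theorem derivative_detOneAddXSMul_eval_zero :
    (detOneAddXSMul b f).derivative.eval 0 = trace R M f := by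
  rw [detOneAddXSMul, Matrix.derivative_det_one_add_X_smul, trace_eq_matrix_trace R b]

theorem natDegree_detOneAddXSMul_le : (detOneAddXSMul b f).natDegree ≤ Fintype.card ι := by
  rw [detOneAddXSMul, add_comm, ← Matrix.map_one C C.map_zero C.map_one]
  exact natDegree_det_X_add_C_le _ _

end LinearMap

theorem ContinuousLinearMap.det_one_add_pos_of_norm_lt_one {E : Type*} [NormedAddCommGroup E]
    [NormedSpace ℝ E] [FiniteDimensional ℝ E] {B : E →L[ℝ] E} (hB : ‖B‖ < 1) :
    0 < (1 + B).det := by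
  set d : ℝ → ℝ := fun u => (1 + u • B).det
  have hd : Continuous d := continuous_det.comp (by fun_prop)
  have hd_ne : ∀ u ∈ Set.Icc (0 : ℝ) 1, d u ≠ 0 := by
    intro u hu
    have hnorm : ‖-(u • B)‖ < 1 := by
      rw [norm_neg, norm_smul, Real.norm_of_nonneg hu.1]
      nlinarith [norm_nonneg B, hu.2]
    have hunit : IsUnit (1 + u • B) := by simpa using isUnit_one_sub_of_norm_lt_one hnorm
    exact (hunit.map (toLinearMapRingHom (R₁ := ℝ) (M₁ := E))).map LinearMap.det |>.ne_zero
  have hd0 : d 0 = 1 := by simp [d, det, one_def]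
  by_contra! hd1
  obtain ⟨u, hu, hdu⟩ := isPreconnected_Icc.intermediate_value
    (Set.right_mem_Icc.2 zero_le_one) (Set.left_mem_Icc.2 zero_le_one) hd.continuousOn
    ⟨by simpa [d] using hd1, hd0 ▸ zero_le_one⟩
  exact hd_ne u hu hdu

theorem measureReal_image_add_eq_integral_det {E : Type*} [NormedAddCommGroup E]
    [NormedSpace ℝ E] [FiniteDimensional ℝ E] [MeasurableSpace E] [BorelSpace E]
    (μ : Measure E) [μ.IsAddHaarMeasure] {f : E → E} {f' : E → E →L[ℝ] E}
    (hf : ∀ x, HasFDerivAt f (f' x) x) {K : ℝ} (hf' : ∀ x, ‖f' x‖ ≤ K) (hK : K < 1)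
    {s : Set E} (hs : MeasurableSet s) :
    μ.real ((fun x => x + f x) '' s) = ∫ x in s, (1 + f' x).det ∂μ := by
  have hlip : LipschitzWith K.toNNReal f := lipschitzOnWith_univ.1 <|
    convex_univ.lipschitzOnWith_of_nnnorm_hasFDerivWithin_le
      (fun x _ => (hf x).hasFDerivWithinAt) fun x _ => by
        simpa [← norm_toNNReal] using Real.toNNReal_le_toNNReal (hf' x)
  have hinj : Function.Injective fun x => x + f x :=
    (AntilipschitzWith.id.add_lipschitzWith hlip (by simpa using hK)).injective
  have hpos : ∀ x, 0 < (1 + f' x).det := fun x =>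
    ContinuousLinearMap.det_one_add_pos_of_norm_lt_one ((hf' x).trans_lt hK)
  calc μ.real ((fun x => x + f x) '' s) = ∫ _ in (fun x => x + f x) '' s, (1 : ℝ) ∂μ := by
        simp
    _ = ∫ x in s, |(1 + f' x).det| • (1 : ℝ) ∂μ :=
        integral_image_eq_integral_abs_det_fderiv_smul μ hs
          (fun x _ => ((hasFDerivAt_id x).add (hf x)).hasFDerivWithinAt) hinj.injOn _
    _ = ∫ x in s, (1 + f' x).det ∂μ :=
        setIntegral_congr_fun hs fun x _ => by simp [abs_of_pos (hpos x)]

/-- First-order volume expansion under a domain perturbation: for a bounded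
measurable set `Ω` and a `C¹` vector field `v` with bounded derivative, the volume
of `Ω_t = (id + t v)(Ω)` is differentiable at `t = 0` with derivative
`∫_Ω div v dx`. -/
theorem volume_first_variation (n : ℕ) (Ω : Set (EuclideanSpace ℝ (Fin n)))
    (hΩm : MeasurableSet Ω) (hΩb : Bornology.IsBounded Ω)
    (v : EuclideanSpace ℝ (Fin n) → EuclideanSpace ℝ (Fin n))
    (hv : ContDiff ℝ 1 v) (C : ℝ) (hC : ∀ x, ‖fderiv ℝ v x‖ ≤ C) :
    HasDerivAt
      (fun t : ℝ => (volume ((fun x => x + t • v x) '' Ω)).toReal)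
      (∫ x in Ω, divergence v x) 0 := by
  let p : EuclideanSpace ℝ (Fin n) → ℝ[X] := fun x =>
    (fderiv ℝ v x).toLinearMap.detOneAddXSMul (EuclideanSpace.basisFun (Fin n) ℝ).toBasis
  have hp_eval : ∀ t x, (p x).eval t = (1 + t • fderiv ℝ v x).det := fun t x =>
    LinearMap.eval_detOneAddXSMul _ _ t
  have hint : ∀ t, IntegrableOn (fun x => (p x).eval t) Ω := fun t => by
    simp_rw [hp_eval]
    exact ((ContinuousLinearMap.continuous_det.comp (continuous_const.add
      ((hv.continuous_fderiv one_ne_zero).const_smul t))).continuousOn.integrableOn_compact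
      hΩb.isCompact_closure).mono_set subset_closure
  have hsmall : ∀ᶠ t in nhds (0 : ℝ), |t| * C < 1 :=
    (continuous_abs.mul continuous_const).continuousAt.eventually_lt continuousAt_const (by simp)
  have hvol : (fun t : ℝ => (volume ((fun x => x + t • v x) '' Ω)).toReal) =ᶠ[nhds 0]
      fun t => ∫ x in Ω, (p x).eval t := by
    filter_upwards [hsmall] with t ht
    simp_rw [hp_eval]
    refine measureReal_image_add_eq_integral_det volume
      (fun x => ((hv.differentiable one_ne_zero) x).hasFDerivAt.const_smul t) (fun x => ?_) ht hΩm
    rw [norm_smul, Real.norm_eq_abs]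
    exact mul_le_mul_of_nonneg_left (hC x) (abs_nonneg t)
  have hdiv : ∫ x in Ω, divergence v x = ∫ x in Ω, (p x).derivative.eval 0 := by
    simp only [p, LinearMap.derivative_detOneAddXSMul_eval_zero, divergence]
  rw [hdiv]
  exact (hasDerivAt_integral_eval (fun x => LinearMap.natDegree_detOneAddXSMul_le _ _) hint 0
    ).congr_of_eventuallyEq hvol
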